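/- Let 𝔨 := {(0⊕A₁, 0⊕A₂) : A₁ ∈ so(p), A₂ ∈ so(q)} ⊆ 𝔥 and let 𝔭 := {M ∈ 𝔤 : the (2,1)-, (3,1)- and (3,2)-blocks of M vanish}. Then α is an injective linear map satisfying: (C.1) α(𝔨) ⊆ 𝔭; (C.2) α([Z,X]) = [α(Z),α(X)] for all Z ∈ 𝔨 and X ∈ 𝔥; and (C.3) 𝔤 = α(𝔥) + 𝔭 and {X ∈ 𝔥 : α(X) ∈ 𝔭} = 𝔨, so that α induces a linear isomorphism 𝔥/𝔨 ≅ 𝔤/𝔭. (α is an invariant Cartan connection of conformal type on the homogeneous space S^p × S^q = (O(p+1)×O(q+1))/(O(p)×O(q)).) -/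

import Mathlib

open Matrix

noncomputable section

/-- The sign `sgn(s')` of a (nonzero) real number. -/
def sgn (s' : ℝ) : ℝ := if 0 < s' then 1 else -1

/-- Index type of `ℝⁿ`, `n = p + q`. -/
abbrev NIdx (p q : ℕ) := Fin p ⊕ Fin q

/-- Index type for block matrices of block sizes `1, n, 1` with `n = p + q`. -/
abbrev BigIdx (p q : ℕ) := (Fin 1 ⊕ (Fin p ⊕ Fin q)) ⊕ Fin 1

/-- Elements of `𝔥 = so(p+1) × so(q+1)`, written as pairs of `(1+p)`- and
`(1+q)`-indexed matrices. -/
abbrev HElt (p q : ℕ) :=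
  Matrix (Fin 1 ⊕ Fin p) (Fin 1 ⊕ Fin p) ℝ × Matrix (Fin 1 ⊕ Fin q) (Fin 1 ⊕ Fin q) ℝ

/-- Membership in `𝔥 = so(p+1) × so(q+1)`: both components are skew-symmetric. -/
def skewPair (p q : ℕ) (X : HElt p q) : Prop := X.1ᵀ = -X.1 ∧ X.2ᵀ = -X.2

/-- The componentwise commutator bracket of `𝔥 = so(p+1) × so(q+1)`. -/
def hBracket (p q : ℕ) (X Y : HElt p q) : HElt p q :=
  (X.1 * Y.1 - Y.1 * X.1, X.2 * Y.2 - Y.2 * X.2)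

/-- `𝐠 = diag(I_p, ε I_q)`, `ε = sgn s'`. -/
def gMat (p q : ℕ) (s' : ℝ) : Matrix (NIdx p q) (NIdx p q) ℝ :=
  fromBlocks 1 0 0 (sgn s' • 1)

/-- `J = [[0,0,1],[0,𝐠,0],[1,0,0]]` (block sizes `1, n, 1`), so that
`𝔤 = so(J) = {M : MᵗJ + JM = 0}`. -/
def JMat (p q : ℕ) (s' : ℝ) : Matrix (BigIdx p q) (BigIdx p q) ℝ :=
  fromBlocks
    (fromBlocks 0 0 0 (gMat p q s'))
    (Matrix.of fun i _ => Sum.elim (fun _ => (1 : ℝ)) (fun _ => 0) i)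
    (Matrix.of fun _ j => Sum.elim (fun _ => (1 : ℝ)) (fun _ => 0) j)
    0

/-- The rho-tensor
`𝔸 = −(1/(2δ))((2sΔ+m)·diag(I_p,0) + (2s'Δ−m)·ε·diag(0,I_q))`, where
`δ = (n−1)(n−2)`, `Δ = (p−1)(q−1)`, `m = s·p(p−1) − s'·q(q−1)`, `ε = sgn s'`. -/
def AMat (p q : ℕ) (s s' : ℝ) : Matrix (NIdx p q) (NIdx p q) ℝ :=
  (-(1 / (2 * (((p : ℝ) + (q : ℝ) - 1) * ((p : ℝ) + (q : ℝ) - 2))))) •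
    ((2 * s * (((p : ℝ) - 1) * ((q : ℝ) - 1)) +
        (s * p * ((p : ℝ) - 1) - s' * q * ((q : ℝ) - 1))) •
      (fromBlocks 1 0 0 0 : Matrix (NIdx p q) (NIdx p q) ℝ) +
     ((2 * s' * (((p : ℝ) - 1) * ((q : ℝ) - 1)) -
        (s * p * ((p : ℝ) - 1) - s' * q * ((q : ℝ) - 1))) * sgn s') •
      (fromBlocks 0 0 0 1 : Matrix (NIdx p q) (NIdx p q) ℝ))

/-- The `ℝᵐ`-component `v` of an element `[[0,−vᵗ],[v,A]]` of `so(m+1)`. -/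
def vPart {m : ℕ} (P : Matrix (Fin 1 ⊕ Fin m) (Fin 1 ⊕ Fin m) ℝ) : Fin m → ℝ :=
  fun i => P (Sum.inr i) (Sum.inl 0)

/-- `x := (v/√s, w/√|s'|) ∈ ℝⁿ` for `X = (v ⊕ A₁, w ⊕ A₂) ∈ 𝔥`. -/
def xVec (p q : ℕ) (s s' : ℝ) (X : HElt p q) : NIdx p q → ℝ :=
  Sum.elim (fun i => vPart X.1 i / Real.sqrt s) (fun j => vPart X.2 j / Real.sqrt |s'|)

/-- The invariant Cartan connection `α : 𝔥 → 𝔤`: for `X = (v ⊕ A₁, w ⊕ A₂)` and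
`x = (v/√s, w/√|s'|)`, `α(X)` is the block matrix (block sizes `1, n, 1`) with
`(1,2)`-block `xᵗ𝔸`, `(2,1)`-block `x`, `(2,2)`-block `diag(A₁,A₂)`,
`(2,3)`-block `−𝐠𝔸x`, `(3,2)`-block `−xᵗ𝐠`, and all other blocks zero. -/
def alphaMap (p q : ℕ) (s s' : ℝ) (X : HElt p q) :
    Matrix (BigIdx p q) (BigIdx p q) ℝ :=
  fromBlocks
    (fromBlocks 0
      (Matrix.of fun _ j => Matrix.vecMul (xVec p q s s' X) (AMat p q s s') j)
      (Matrix.of fun i _ => xVec p q s s' X i)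
      (fromBlocks (toBlocks₂₂ X.1) 0 0 (toBlocks₂₂ X.2)))
    (Matrix.of fun i _ => Sum.elim (fun _ => (0 : ℝ))
      (fun k => -(Matrix.mulVec (gMat p q s' * AMat p q s s') (xVec p q s s' X) k)) i)
    (Matrix.of fun _ j => Sum.elim (fun _ => (0 : ℝ))
      (fun k => -(Matrix.vecMul (xVec p q s s' X) (gMat p q s') k)) j)
    0

/-- The curvature `κ(X,Y) = [α(X),α(Y)] − α([X,Y])` of the Cartan connection `α`. -/
def kappaMap (p q : ℕ) (s s' : ℝ) (X Y : HElt p q) :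
    Matrix (BigIdx p q) (BigIdx p q) ℝ :=
  alphaMap p q s s' X * alphaMap p q s s' Y - alphaMap p q s s' Y * alphaMap p q s s' X -
    alphaMap p q s s' (hBracket p q X Y)

/-- `𝔨 = {(0 ⊕ A₁, 0 ⊕ A₂) : A₁ ∈ so(p), A₂ ∈ so(q)} ⊆ 𝔥`. -/
def kSet (p q : ℕ) : Set (HElt p q) :=
  {Z | ∃ (A₁ : Matrix (Fin p) (Fin p) ℝ) (A₂ : Matrix (Fin q) (Fin q) ℝ),
    A₁ᵀ = -A₁ ∧ A₂ᵀ = -A₂ ∧ Z = (fromBlocks 0 0 0 A₁, fromBlocks 0 0 0 A₂)}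

/-- `𝔭 = {M ∈ 𝔤 : the (2,1)-, (3,1)- and (3,2)-blocks of M vanish}`. -/
def pSet (p q : ℕ) (s' : ℝ) : Set (Matrix (BigIdx p q) (BigIdx p q) ℝ) :=
  {M | Mᵀ * JMat p q s' + JMat p q s' * M = 0 ∧
    (∀ (j : NIdx p q) (a : Fin 1), M (Sum.inl (Sum.inr j)) (Sum.inl (Sum.inl a)) = 0) ∧
    (∀ (b : Fin 1) (a : Fin 1), M (Sum.inr b) (Sum.inl (Sum.inl a)) = 0) ∧
    (∀ (b : Fin 1) (j : NIdx p q), M (Sum.inr b) (Sum.inl (Sum.inr j)) = 0)}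

/-!
Write `α(X)` as `cartanBlock x R a g`, a block matrix built from the translation part `x`, the
rotation part `R = diag(A₁, A₂)` and the diagonals `a`, `g` of `𝔸` and `𝐠`. Such a matrix lies in
`so(J)` as soon as `R` is skew and commutes with `𝐠` (and `g² = 1`), and bracketing with
`cartanBlock 0 D`, for `D` skew and commuting with `𝔸` and `𝐠`, acts as `(x, R) ↦ (Dx, [D, R])`.
Rotation parts are block diagonal, hence commute with `𝔸` and `𝐠`: this gives `α ∈ so(J)` and (C.2).

In `so(J)` the (3,1)- and (3,2)-blocks are determined by the (2,1)-block, so membership in `𝔭`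
only asks that the (2,1)-block vanish. Everything else then reduces to `X ↦ x` being, for `s > 0`
and `s' ≠ 0`, a surjection `𝔥 → ℝⁿ` with kernel `𝔨`, and to `X` being determined by `x` and `R`.
-/

theorem Matrix.apply_eq_neg_of_transpose_eq_neg {n α : Type*} [Neg α] {A : Matrix n n α}
    (h : Aᵀ = -A) (i j : n) : A j i = -A i j := by
  simpa using congrFun (congrFun h i) j

theorem Commute.apply_mul_eq_of_diagonal {n α : Type*} [Fintype n] [DecidableEq n]
    [NonUnitalNonAssocSemiring α] {A : Matrix n n α} {d : n → α} (h : Commute A (diagonal d))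
    (i j : n) : A i j * d j = d i * A i j := by
  simpa using congrFun (congrFun h.eq i) j

theorem Matrix.isSkewAdjoint_iff_transpose_mul_add_mul_eq_zero {n R : Type*} [Fintype n]
    [CommRing R] (J A : Matrix n n R) : J.IsSkewAdjoint A ↔ Aᵀ * J + J * A = 0 := by
  rw [Matrix.IsSkewAdjoint, Matrix.IsAdjointPair, mul_neg, eq_neg_iff_add_eq_zero]

theorem Matrix.commute_fromBlocks_zero_zero {l n α : Type*} [Fintype l] [Fintype n] [Semiring α]
    {A A' : Matrix l l α} {B B' : Matrix n n α} (hA : Commute A A') (hB : Commute B B') :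
    Commute (fromBlocks A 0 0 B) (fromBlocks A' 0 0 B') := by
  simp [Commute, SemiconjBy, fromBlocks_multiply, hA.eq, hB.eq]

namespace CartanConnection

section Blocks

variable {ι : Type*}

abbrev BlockIdx (ι : Type*) := (Fin 1 ⊕ ι) ⊕ Fin 1

def cartanBlock (x : ι → ℝ) (R : Matrix ι ι ℝ) (a g : ι → ℝ) :
    Matrix (BlockIdx ι) (BlockIdx ι) ℝ :=
  fromBlocks (fromBlocks 0 (of fun _ j => x j * a j) (of fun i _ => x i) R)
    (of fun i _ => Sum.elim (fun _ => 0) (fun k => -(g k * a k * x k)) i)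
    (of fun _ j => Sum.elim (fun _ => 0) (fun k => -(x k * g k)) j) 0

theorem cartanBlock_add (x y : ι → ℝ) (R S : Matrix ι ι ℝ) (a g : ι → ℝ) :
    cartanBlock (x + y) (R + S) a g = cartanBlock x R a g + cartanBlock y S a g := by
  ext ((_ | k) | _) ((_ | k') | _) <;> simp [cartanBlock] <;> ring

theorem cartanBlock_smul (c : ℝ) (x : ι → ℝ) (R : Matrix ι ι ℝ) (a g : ι → ℝ) :
    cartanBlock (c • x) (c • R) a g = c • cartanBlock x R a g := by
  ext ((_ | k) | _) ((_ | k') | _) <;> simp [cartanBlock] <;> ring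

theorem cartanBlock_inj {x y : ι → ℝ} {R S : Matrix ι ι ℝ} {a g : ι → ℝ}
    (h : cartanBlock x R a g = cartanBlock y S a g) : x = y ∧ R = S :=
  ⟨funext fun k => congrFun (congrFun h (.inl (.inr k))) (.inl (.inl 0)),
    ext fun k k' => congrFun (congrFun h (.inl (.inr k))) (.inl (.inr k'))⟩

variable [DecidableEq ι]

def jBlock (g : ι → ℝ) : Matrix (BlockIdx ι) (BlockIdx ι) ℝ :=
  fromBlocks (fromBlocks 0 0 0 (diagonal g))
    (of fun i _ => Sum.elim (fun _ => (1 : ℝ)) (fun _ => 0) i)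
    (of fun _ j => Sum.elim (fun _ => (1 : ℝ)) (fun _ => 0) j) 0

variable [Fintype ι]

theorem cartanBlock_isSkewAdjoint (x : ι → ℝ) {R : Matrix ι ι ℝ} (a : ι → ℝ) {g : ι → ℝ}
    (hR : Rᵀ = -R) (hRg : Commute R (diagonal g)) (hg : ∀ k, g k * g k = 1) :
    (jBlock g).IsSkewAdjoint (cartanBlock x R a g) := by
  rw [isSkewAdjoint_iff_transpose_mul_add_mul_eq_zero]
  ext ((_ | k) | _) ((_ | k') | _) <;>
    simp [Matrix.mul_apply, Fintype.sum_sum_type, jBlock, cartanBlock, diagonal_apply]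
  · ring
  · linear_combination g k' * R.apply_eq_neg_of_transpose_eq_neg hR k k' -
      hRg.apply_mul_eq_of_diagonal k k'
  · linear_combination (-(a k * x k)) * hg k
  · linear_combination (-(a k' * x k')) * hg k'

theorem cartanBlock_commutator (x : ι → ℝ) (R : Matrix ι ι ℝ) {D : Matrix ι ι ℝ} {a g : ι → ℝ}
    (hD : Dᵀ = -D) (hDa : Commute D (diagonal a)) (hDg : Commute D (diagonal g)) :
    cartanBlock (D *ᵥ x) (D * R - R * D) a g =
      cartanBlock 0 D a g * cartanBlock x R a g - cartanBlock x R a g * cartanBlock 0 D a g := by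
  ext ((_ | k) | _) ((_ | k') | _) <;>
    simp [Matrix.mul_apply, Fintype.sum_sum_type, cartanBlock, mulVec, dotProduct]
  · rw [Finset.sum_mul, ← Finset.sum_neg_distrib]
    refine Finset.sum_congr rfl fun m _ => ?_
    rw [D.apply_eq_neg_of_transpose_eq_neg hD m k']
    linear_combination (-x m) * hDa.apply_mul_eq_of_diagonal m k'
  · rw [Finset.mul_sum]
    refine Finset.sum_congr rfl fun m _ => ?_
    linear_combination (-(a m * x m)) * hDg.apply_mul_eq_of_diagonal k m -
      (g k * x m) * hDa.apply_mul_eq_of_diagonal k m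
  · rw [Finset.sum_mul, ← Finset.sum_neg_distrib]
    refine Finset.sum_congr rfl fun m _ => ?_
    rw [D.apply_eq_neg_of_transpose_eq_neg hD m k']
    linear_combination x m * hDg.apply_mul_eq_of_diagonal m k'

theorem apply_inr_inl_inl_eq_zero {g : ι → ℝ} {M : Matrix (BlockIdx ι) (BlockIdx ι) ℝ}
    (hM : (jBlock g).IsSkewAdjoint M) : M (.inr 0) (.inl (.inl 0)) = 0 := by
  rw [isSkewAdjoint_iff_transpose_mul_add_mul_eq_zero] at hM
  simpa [Matrix.mul_apply, Fintype.sum_sum_type, jBlock] using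
    congrFun (congrFun hM (.inl (.inl 0))) (.inl (.inl 0))

theorem apply_inr_inl_inr_eq {g : ι → ℝ} {M : Matrix (BlockIdx ι) (BlockIdx ι) ℝ}
    (hM : (jBlock g).IsSkewAdjoint M) (k : ι) :
    M (.inr 0) (.inl (.inr k)) = -(M (.inl (.inr k)) (.inl (.inl 0)) * g k) := by
  rw [isSkewAdjoint_iff_transpose_mul_add_mul_eq_zero] at hM
  simpa [Matrix.mul_apply, Fintype.sum_sum_type, jBlock, diagonal_apply, eq_neg_iff_add_eq_zero,
    add_comm] using congrFun (congrFun hM (.inl (.inl 0))) (.inl (.inr k))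

end Blocks

section SkewBlocks

variable {m : ℕ}

/-- The paper's `v ⊕ A ∈ so(m+1)`. -/
def soBlock (v : Fin m → ℝ) (A : Matrix (Fin m) (Fin m) ℝ) :
    Matrix (Fin 1 ⊕ Fin m) (Fin 1 ⊕ Fin m) ℝ :=
  fromBlocks 0 (of fun _ j => -v j) (of fun i _ => v i) A

@[simp]
theorem vPart_soBlock (v : Fin m → ℝ) (A : Matrix (Fin m) (Fin m) ℝ) :
    vPart (soBlock v A) = v := rfl

theorem soBlock_zero_left (A : Matrix (Fin m) (Fin m) ℝ) : soBlock 0 A = fromBlocks 0 0 0 A := by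
  ext (_ | _) (_ | _) <;> simp [soBlock]

theorem soBlock_transpose (v : Fin m → ℝ) {A : Matrix (Fin m) (Fin m) ℝ} (hA : Aᵀ = -A) :
    (soBlock v A)ᵀ = -soBlock v A := by
  rw [soBlock, fromBlocks_transpose, fromBlocks_neg, hA, transpose_zero, neg_zero]
  congr 1
  ext
  simp

theorem eq_soBlock_of_transpose_eq_neg {P : Matrix (Fin 1 ⊕ Fin m) (Fin 1 ⊕ Fin m) ℝ}
    (hP : Pᵀ = -P) : P = soBlock (vPart P) (toBlocks₂₂ P) := by
  have hskew := P.apply_eq_neg_of_transpose_eq_neg hP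
  ext (a | i) (b | j)
  · obtain rfl := Subsingleton.elim a b
    simp only [soBlock, fromBlocks_apply₁₁, Matrix.zero_apply]
    linarith [hskew (.inl a) (.inl a)]
  · simp [soBlock, vPart, Subsingleton.elim a 0, hskew (.inr j) (.inl 0)]
  · simp [soBlock, vPart, Subsingleton.elim b 0]
  · rfl

theorem toBlocks₂₂_transpose_eq_neg {P : Matrix (Fin 1 ⊕ Fin m) (Fin 1 ⊕ Fin m) ℝ}
    (hP : Pᵀ = -P) : (toBlocks₂₂ P)ᵀ = -toBlocks₂₂ P := by
  ext i j
  exact P.apply_eq_neg_of_transpose_eq_neg hP (.inr i) (.inr j)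

theorem vPart_fromBlocks_zero (A : Matrix (Fin m) (Fin m) ℝ) :
    vPart (fromBlocks 0 0 0 A : Matrix (Fin 1 ⊕ Fin m) (Fin 1 ⊕ Fin m) ℝ) = 0 := rfl

theorem vPart_commutator_fromBlocks_zero (A : Matrix (Fin m) (Fin m) ℝ)
    (P : Matrix (Fin 1 ⊕ Fin m) (Fin 1 ⊕ Fin m) ℝ) :
    vPart (fromBlocks 0 0 0 A * P - P * fromBlocks 0 0 0 A) = A *ᵥ vPart P := by
  ext i
  simp [vPart, Matrix.mul_apply, Fintype.sum_sum_type, mulVec, dotProduct]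

theorem toBlocks₂₂_commutator_fromBlocks_zero (A : Matrix (Fin m) (Fin m) ℝ)
    (P : Matrix (Fin 1 ⊕ Fin m) (Fin 1 ⊕ Fin m) ℝ) :
    toBlocks₂₂ (fromBlocks 0 0 0 A * P - P * fromBlocks 0 0 0 A) =
      A * toBlocks₂₂ P - toBlocks₂₂ P * A := by
  ext i j
  simp [toBlocks₂₂, Matrix.mul_apply, Fintype.sum_sum_type]

end SkewBlocks

theorem sgn_mul_self (s' : ℝ) : sgn s' * sgn s' = 1 := by
  unfold sgn; split_ifs <;> norm_num

section Connection

variable {p q : ℕ} {s s' : ℝ}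

def rotBlock (X : HElt p q) : Matrix (NIdx p q) (NIdx p q) ℝ :=
  fromBlocks (toBlocks₂₂ X.1) 0 0 (toBlocks₂₂ X.2)

variable (p q s') in
theorem gMat_isDiag : (gMat p q s').IsDiag :=
  isDiag_one.fromBlocks ((isDiag_one).smul _)

variable (p q s s') in
theorem AMat_isDiag : (AMat p q s s').IsDiag :=
  (((isDiag_one.fromBlocks isDiag_zero).smul _).add
    ((isDiag_zero.fromBlocks isDiag_one).smul _)).smul _

variable (p q s') in
theorem diag_gMat_mul_self (k : NIdx p q) : diag (gMat p q s') k * diag (gMat p q s') k = 1 := by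
  rcases k with i | j <;> simp [gMat, sgn_mul_self]

theorem commute_rotBlock_gMat (X : HElt p q) : Commute (rotBlock X) (gMat p q s') :=
  commute_fromBlocks_zero_zero (.one_right _) ((Commute.one_right _).smul_right _)

theorem commute_rotBlock_AMat (X : HElt p q) : Commute (rotBlock X) (AMat p q s s') :=
  (((commute_fromBlocks_zero_zero (.one_right _) (.zero_right _)).smul_right _).add_right
    ((commute_fromBlocks_zero_zero (.zero_right _) (.one_right _)).smul_right _)).smul_right _

theorem rotBlock_transpose {X : HElt p q} (hX : skewPair p q X) :
    (rotBlock X)ᵀ = -rotBlock X := by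
  simp [rotBlock, fromBlocks_transpose, fromBlocks_neg, toBlocks₂₂_transpose_eq_neg hX.1,
    toBlocks₂₂_transpose_eq_neg hX.2]

theorem alphaMap_eq_cartanBlock (X : HElt p q) :
    alphaMap p q s s' X =
      cartanBlock (xVec p q s s' X) (rotBlock X) (diag (AMat p q s s')) (diag (gMat p q s')) := by
  conv_lhs => rw [alphaMap, ← (AMat_isDiag p q s s').diagonal_diag,
    ← (gMat_isDiag p q s').diagonal_diag]
  ext ((_ | k) | _) ((_ | k') | _) <;>
    simp [cartanBlock, rotBlock, vecMul_diagonal, mulVec_diagonal]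

theorem JMat_eq_jBlock : JMat p q s' = jBlock (diag (gMat p q s')) := by
  rw [JMat, jBlock, (gMat_isDiag p q s').diagonal_diag]

theorem alphaMap_isSkewAdjoint {X : HElt p q} (hX : skewPair p q X) :
    (JMat p q s').IsSkewAdjoint (alphaMap p q s s' X) := by
  rw [alphaMap_eq_cartanBlock, JMat_eq_jBlock]
  refine cartanBlock_isSkewAdjoint _ _ (rotBlock_transpose hX) ?_ (diag_gMat_mul_self p q s')
  rw [(gMat_isDiag p q s').diagonal_diag]
  exact commute_rotBlock_gMat X

theorem xVec_add (X Y : HElt p q) :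
    xVec p q s s' (X + Y) = xVec p q s s' X + xVec p q s s' Y := by
  ext (i | j) <;> simp [xVec, vPart, add_div]

theorem xVec_smul (c : ℝ) (X : HElt p q) : xVec p q s s' (c • X) = c • xVec p q s s' X := by
  ext (i | j) <;> simp [xVec, vPart, mul_div_assoc]

theorem rotBlock_add (X Y : HElt p q) : rotBlock (X + Y) = rotBlock X + rotBlock Y := by
  ext (i | j) (i' | j') <;> simp [rotBlock, toBlocks₂₂]

theorem rotBlock_smul (c : ℝ) (X : HElt p q) : rotBlock (c • X) = c • rotBlock X := by
  ext (i | j) (i' | j') <;> simp [rotBlock, toBlocks₂₂]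

theorem alphaMap_add (X Y : HElt p q) :
    alphaMap p q s s' (X + Y) = alphaMap p q s s' X + alphaMap p q s s' Y := by
  simp only [alphaMap_eq_cartanBlock, xVec_add, rotBlock_add, cartanBlock_add]

theorem alphaMap_smul (c : ℝ) (X : HElt p q) :
    alphaMap p q s s' (c • X) = c • alphaMap p q s s' X := by
  simp only [alphaMap_eq_cartanBlock, xVec_smul, rotBlock_smul, cartanBlock_smul]

theorem skewPair_of_mem_kSet {Z : HElt p q} (hZ : Z ∈ kSet p q) : skewPair p q Z := by
  obtain ⟨A₁, A₂, h₁, h₂, rfl⟩ := hZ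
  simp only [skewPair, ← soBlock_zero_left]
  exact ⟨soBlock_transpose 0 h₁, soBlock_transpose 0 h₂⟩

theorem xVec_eq_zero_of_mem_kSet {Z : HElt p q} (hZ : Z ∈ kSet p q) : xVec p q s s' Z = 0 := by
  obtain ⟨A₁, A₂, -, -, rfl⟩ := hZ
  ext (i | j) <;> simp [xVec, vPart_fromBlocks_zero]

theorem xVec_hBracket_of_mem_kSet {Z : HElt p q} (hZ : Z ∈ kSet p q) (X : HElt p q) :
    xVec p q s s' (hBracket p q Z X) = rotBlock Z *ᵥ xVec p q s s' X := by
  obtain ⟨A₁, A₂, -, -, rfl⟩ := hZ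
  ext (i | j) <;>
    simp [xVec, hBracket, vPart_commutator_fromBlocks_zero, rotBlock,
      mulVec, dotProduct, Finset.sum_div, mul_div_assoc]

theorem rotBlock_hBracket_of_mem_kSet {Z : HElt p q} (hZ : Z ∈ kSet p q) (X : HElt p q) :
    rotBlock (hBracket p q Z X) = rotBlock Z * rotBlock X - rotBlock X * rotBlock Z := by
  obtain ⟨A₁, A₂, -, -, rfl⟩ := hZ
  simp only [rotBlock, hBracket, toBlocks₂₂_commutator_fromBlocks_zero]
  simp [fromBlocks_multiply, sub_eq_add_neg, fromBlocks_neg, fromBlocks_add]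

theorem alphaMap_hBracket_of_mem_kSet {Z : HElt p q} (hZ : Z ∈ kSet p q) (X : HElt p q) :
    alphaMap p q s s' (hBracket p q Z X) =
      alphaMap p q s s' Z * alphaMap p q s s' X - alphaMap p q s s' X * alphaMap p q s s' Z := by
  simp only [alphaMap_eq_cartanBlock, xVec_hBracket_of_mem_kSet hZ,
    rotBlock_hBracket_of_mem_kSet hZ, xVec_eq_zero_of_mem_kSet hZ]
  refine cartanBlock_commutator _ _ (rotBlock_transpose (skewPair_of_mem_kSet hZ)) ?_ ?_
  · rw [(AMat_isDiag p q s s').diagonal_diag]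
    exact commute_rotBlock_AMat Z
  · rw [(gMat_isDiag p q s').diagonal_diag]
    exact commute_rotBlock_gMat Z

theorem mem_pSet_iff {M : Matrix (BigIdx p q) (BigIdx p q) ℝ}
    (hM : (JMat p q s').IsSkewAdjoint M) :
    M ∈ pSet p q s' ↔ ∀ k, M (.inl (.inr k)) (.inl (.inl 0)) = 0 := by
  have hJ : (jBlock (diag (gMat p q s'))).IsSkewAdjoint M := by rwa [← JMat_eq_jBlock]
  refine ⟨fun h k => h.2.1 k 0, fun h =>
    ⟨(isSkewAdjoint_iff_transpose_mul_add_mul_eq_zero _ _).1 hM, fun k a => ?_, fun b a => ?_,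
      fun b k => ?_⟩⟩
  · rw [Subsingleton.elim a 0, h k]
  · rw [Subsingleton.elim a 0, Subsingleton.elim b 0, apply_inr_inl_inl_eq_zero hJ]
  · rw [Subsingleton.elim b 0, apply_inr_inl_inr_eq hJ, h k, zero_mul, neg_zero]

theorem alphaMap_mem_pSet_iff {X : HElt p q} (hX : skewPair p q X) :
    alphaMap p q s s' X ∈ pSet p q s' ↔ xVec p q s s' X = 0 := by
  rw [mem_pSet_iff (alphaMap_isSkewAdjoint hX), alphaMap_eq_cartanBlock, funext_iff]
  simp [cartanBlock]

theorem alphaMap_mem_pSet_of_mem_kSet {Z : HElt p q} (hZ : Z ∈ kSet p q) :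
    alphaMap p q s s' Z ∈ pSet p q s' :=
  (alphaMap_mem_pSet_iff (skewPair_of_mem_kSet hZ)).2 (xVec_eq_zero_of_mem_kSet hZ)

theorem vPart_fst_eq_smul (hs : 0 < s) (X : HElt p q) :
    vPart X.1 = √s • (xVec p q s s' X ∘ Sum.inl) := by
  ext i
  simp [xVec, mul_div_cancel₀ _ (Real.sqrt_pos.2 hs).ne']

theorem vPart_snd_eq_smul (hs' : s' ≠ 0) (X : HElt p q) :
    vPart X.2 = √|s'| • (xVec p q s s' X ∘ Sum.inr) := by
  ext j
  simp [xVec, mul_div_cancel₀ _ (Real.sqrt_pos.2 (abs_pos.2 hs')).ne']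

theorem exists_skewPair_xVec_eq (hs : 0 < s) (hs' : s' ≠ 0) (y : NIdx p q → ℝ) :
    ∃ X : HElt p q, skewPair p q X ∧ xVec p q s s' X = y := by
  refine ⟨(soBlock (√s • (y ∘ Sum.inl)) 0, soBlock (√|s'| • (y ∘ Sum.inr)) 0),
    ⟨soBlock_transpose _ (by simp), soBlock_transpose _ (by simp)⟩, ?_⟩
  ext (i | j) <;> simp [xVec, (Real.sqrt_pos.2 hs).ne', (Real.sqrt_pos.2 (abs_pos.2 hs')).ne']

theorem mem_kSet_iff_xVec_eq_zero (hs : 0 < s) (hs' : s' ≠ 0) {X : HElt p q}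
    (hX : skewPair p q X) : X ∈ kSet p q ↔ xVec p q s s' X = 0 := by
  refine ⟨xVec_eq_zero_of_mem_kSet, fun h => ?_⟩
  have h₁ : vPart X.1 = 0 := by simp [vPart_fst_eq_smul (s' := s') hs, h]
  have h₂ : vPart X.2 = 0 := by simp [vPart_snd_eq_smul (s := s) hs', h]
  refine ⟨toBlocks₂₂ X.1, toBlocks₂₂ X.2, toBlocks₂₂_transpose_eq_neg hX.1,
    toBlocks₂₂_transpose_eq_neg hX.2, Prod.ext ?_ ?_⟩
  · exact (eq_soBlock_of_transpose_eq_neg hX.1).trans (by rw [h₁, soBlock_zero_left])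
  · exact (eq_soBlock_of_transpose_eq_neg hX.2).trans (by rw [h₂, soBlock_zero_left])

theorem alphaMap_injOn (hs : 0 < s) (hs' : s' ≠ 0) :
    Set.InjOn (alphaMap p q s s') {X | skewPair p q X} := by
  intro X (hX : skewPair p q X) Y (hY : skewPair p q Y) h
  rw [alphaMap_eq_cartanBlock, alphaMap_eq_cartanBlock] at h
  obtain ⟨hx, hR⟩ := cartanBlock_inj h
  obtain ⟨h₁, -, -, h₂⟩ := fromBlocks_inj.1 hR
  refine Prod.ext ?_ ?_
  · rw [eq_soBlock_of_transpose_eq_neg hX.1, eq_soBlock_of_transpose_eq_neg hY.1,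
      vPart_fst_eq_smul (s' := s') hs X, vPart_fst_eq_smul (s' := s') hs Y, hx, h₁]
  · rw [eq_soBlock_of_transpose_eq_neg hX.2, eq_soBlock_of_transpose_eq_neg hY.2,
      vPart_snd_eq_smul (s := s) hs' X, vPart_snd_eq_smul (s := s) hs' Y, hx, h₂]

theorem exists_alphaMap_add_mem_pSet (hs : 0 < s) (hs' : s' ≠ 0)
    {M : Matrix (BigIdx p q) (BigIdx p q) ℝ} (hM : (JMat p q s').IsSkewAdjoint M) :
    ∃ X : HElt p q, skewPair p q X ∧ ∃ P ∈ pSet p q s', M = alphaMap p q s s' X + P := by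
  obtain ⟨X, hX, hxX⟩ :=
    exists_skewPair_xVec_eq hs hs' fun k => M (.inl (.inr k)) (.inl (.inl 0))
  have hP : (JMat p q s').IsSkewAdjoint (M - alphaMap p q s s' X) := by
    rw [← mem_skewAdjointMatricesSubmodule] at hM ⊢
    exact sub_mem hM ((mem_skewAdjointMatricesSubmodule _ _).2 (alphaMap_isSkewAdjoint hX))
  refine ⟨X, hX, _, (mem_pSet_iff hP).2 fun k => ?_, (add_sub_cancel _ _).symm⟩
  simp [alphaMap_eq_cartanBlock, cartanBlock, hxX]

end Connection

end CartanConnection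

open CartanConnection

theorem alpha_is_invariant_cartan_connection_general (p q : ℕ) (s s' : ℝ) (hs : 0 < s) (hs' : s' ≠ 0) :
    -- α is injective on 𝔥
    (∀ X Y : HElt p q, skewPair p q X → skewPair p q Y →
      alphaMap p q s s' X = alphaMap p q s s' Y → X = Y) ∧
    -- α is linear
    (∀ X Y : HElt p q, skewPair p q X → skewPair p q Y →
      alphaMap p q s s' (X + Y) = alphaMap p q s s' X + alphaMap p q s s' Y) ∧
    (∀ (c : ℝ) (X : HElt p q), skewPair p q X →
      alphaMap p q s s' (c • X) = c • alphaMap p q s s' X) ∧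
    -- (C.1) α(𝔨) ⊆ 𝔭
    (∀ Z ∈ kSet p q, alphaMap p q s s' Z ∈ pSet p q s') ∧
    -- (C.2) α([Z,X]) = [α(Z), α(X)] for Z ∈ 𝔨, X ∈ 𝔥
    (∀ Z ∈ kSet p q, ∀ X : HElt p q, skewPair p q X →
      alphaMap p q s s' (hBracket p q Z X) =
        alphaMap p q s s' Z * alphaMap p q s s' X -
          alphaMap p q s s' X * alphaMap p q s s' Z) ∧
    -- (C.3) 𝔤 = α(𝔥) + 𝔭 and {X ∈ 𝔥 : α(X) ∈ 𝔭} = 𝔨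
    (∀ M : Matrix (BigIdx p q) (BigIdx p q) ℝ,
      Mᵀ * JMat p q s' + JMat p q s' * M = 0 →
      ∃ X : HElt p q, skewPair p q X ∧ ∃ P ∈ pSet p q s', M = alphaMap p q s s' X + P) ∧
    (∀ X : HElt p q, skewPair p q X →
      (alphaMap p q s s' X ∈ pSet p q s' ↔ X ∈ kSet p q)) := by
  refine ⟨fun X Y hX hY h => alphaMap_injOn hs hs' hX hY h,
    fun X Y _ _ => alphaMap_add X Y, fun c X _ => alphaMap_smul c X,
    fun Z hZ => alphaMap_mem_pSet_of_mem_kSet hZ,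
    fun Z hZ X _ => alphaMap_hBracket_of_mem_kSet hZ X,
    fun M hM => exists_alphaMap_add_mem_pSet hs hs'
      ((isSkewAdjoint_iff_transpose_mul_add_mul_eq_zero _ _).2 hM),
    fun X hX => (alphaMap_mem_pSet_iff hX).trans (mem_kSet_iff_xVec_eq_zero hs hs' hX).symm⟩

/-- **`α` is an invariant Cartan connection of conformal type on the homogeneous space
`Sᵖ × S^q = (O(p+1)×O(q+1))/(O(p)×O(q))`:** `α` is an injective linear map satisfying
(C.1) `α(𝔨) ⊆ 𝔭`; (C.2) `α([Z,X]) = [α(Z), α(X)]` for all `Z ∈ 𝔨`, `X ∈ 𝔥`; and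
(C.3) `𝔤 = α(𝔥) + 𝔭` together with `{X ∈ 𝔥 : α(X) ∈ 𝔭} = 𝔨`, so that `α` induces a
linear isomorphism `𝔥/𝔨 ≅ 𝔤/𝔭`. -/
theorem alpha_is_invariant_cartan_connection (p q : ℕ) (hp : 1 ≤ p) (hq : 1 ≤ q)
    (hn : 3 ≤ p + q) (s s' : ℝ) (hs : 0 < s) (hs' : s' ≠ 0) :
    -- α is injective on 𝔥
    (∀ X Y : HElt p q, skewPair p q X → skewPair p q Y →
      alphaMap p q s s' X = alphaMap p q s s' Y → X = Y) ∧
    -- α is linear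
    (∀ X Y : HElt p q, skewPair p q X → skewPair p q Y →
      alphaMap p q s s' (X + Y) = alphaMap p q s s' X + alphaMap p q s s' Y) ∧
    (∀ (c : ℝ) (X : HElt p q), skewPair p q X →
      alphaMap p q s s' (c • X) = c • alphaMap p q s s' X) ∧
    -- (C.1) α(𝔨) ⊆ 𝔭
    (∀ Z ∈ kSet p q, alphaMap p q s s' Z ∈ pSet p q s') ∧
    -- (C.2) α([Z,X]) = [α(Z), α(X)] for Z ∈ 𝔨, X ∈ 𝔥
    (∀ Z ∈ kSet p q, ∀ X : HElt p q, skewPair p q X →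
      alphaMap p q s s' (hBracket p q Z X) =
        alphaMap p q s s' Z * alphaMap p q s s' X -
          alphaMap p q s s' X * alphaMap p q s s' Z) ∧
    -- (C.3) 𝔤 = α(𝔥) + 𝔭 and {X ∈ 𝔥 : α(X) ∈ 𝔭} = 𝔨
    (∀ M : Matrix (BigIdx p q) (BigIdx p q) ℝ,
      Mᵀ * JMat p q s' + JMat p q s' * M = 0 →
      ∃ X : HElt p q, skewPair p q X ∧ ∃ P ∈ pSet p q s', M = alphaMap p q s s' X + P) ∧
    (∀ X : HElt p q, skewPair p q X →
      (alphaMap p q s s' X ∈ pSet p q s' ↔ X ∈ kSet p q)) :=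
  alpha_is_invariant_cartan_connection_general p q s s' hs hs'

end
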